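/- arXiv:1205.3634 — 5 statements merged into one kernel-verified Lean document; each statement's English description precedes it below -/
import Mathlib

section
/- Let X be a sequentially compact topological space, (C_n) a sequence of connected subsets of X, and U, V disjoint open subsets of X. Suppose there are sequences (x_n) and (y_n) with x_n, y_n ∈ C_n for all n, such that (x_n) converges to a point x ∈ U and (y_n) converges to a point y ∈ V. Then there exists a point z belonging to the intersection over all n of the closures of the unions ⋃_{k>n} C_k, with z ∉ U ∪ V. -/
open Topology Filter Set

theorem stmt_0 {X : Type*} [TopologicalSpace X] [SeqCompactSpace X]
    (C : ℕ → Set X) (hC : ∀ n, IsConnected (C n))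
    (U V : Set X) (hU : IsOpen U) (hV : IsOpen V) (hUV : Disjoint U V)
    (x y : X) (hx : x ∈ U) (hy : y ∈ V)
    (xs ys : ℕ → X) (hxs : ∀ n, xs n ∈ C n) (hys : ∀ n, ys n ∈ C n)
    (hxlim : Tendsto xs atTop (𝓝 x)) (hylim : Tendsto ys atTop (𝓝 y)) :
    ∃ z, z ∈ (⋂ n : ℕ, closure (⋃ k, ⋃ (_ : k > n), C k)) ∧ z ∉ U ∪ V := by
  obtain ⟨N1, hN1⟩ := (hxlim.eventually (hU.mem_nhds hx)).exists_forall_of_atTop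
  obtain ⟨N2, hN2⟩ := (hylim.eventually (hV.mem_nhds hy)).exists_forall_of_atTop
  set N := max N1 N2 with hN
  have key : ∀ n, ∃ w ∈ C (n + N), w ∉ U ∪ V := by
    intro n
    by_contra h
    push_neg at h
    have hsub : C (n + N) ⊆ U ∪ V := fun w hw => h w hw
    have h1 : (C (n + N) ∩ U).Nonempty :=
      ⟨xs (n + N), hxs _, hN1 _ (le_trans (le_max_left _ _) (Nat.le_add_left _ _))⟩
    have h2 : (C (n + N) ∩ V).Nonempty :=
      ⟨ys (n + N), hys _, hN2 _ (le_trans (le_max_right _ _) (Nat.le_add_left _ _))⟩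
    obtain ⟨w, -, hwU, hwV⟩ := (hC (n + N)).2 U V hU hV hsub h1 h2
    exact hUV.ne_of_mem hwU hwV rfl
  choose w hwC hwUV using key
  obtain ⟨z, φ, hφ, hz⟩ := SeqCompactSpace.tendsto_subseq w
  refine ⟨z, ?_, ?_⟩
  · refine mem_iInter.2 fun n => ?_
    refine mem_closure_of_tendsto hz ?_
    filter_upwards [eventually_ge_atTop (n + 1)] with m hm
    have : n < φ m + N := lt_of_lt_of_le hm (le_trans (hφ.id_le m) (Nat.le_add_right _ _))
    exact mem_iUnion.2 ⟨φ m + N, mem_iUnion.2 ⟨this, hwC (φ m)⟩⟩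
  · have : IsClosed (U ∪ V)ᶜ := (hU.union hV).isClosed_compl
    exact this.mem_of_tendsto hz (Eventually.of_forall fun m => hwUV (φ m))
end

section
/- Let G be a topological group acting continuously on a sequentially compact metrizable space X, and suppose the relation R = {(x,y) : y ∈ closure(G·x)} is closed in X × X. If (w_n) is a sequence converging to w ∈ X such that the orbit closure closure(G·w_n) is connected for every n, then closure(G·w) is connected. -/
open Topology Filter Set

theorem stmt_1 {G X : Type*} [Group G] [TopologicalSpace G] [TopologicalSpace X]
    [MulAction G X] [ContinuousSMul G X]
    [SeqCompactSpace X] [TopologicalSpace.MetrizableSpace X]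
    (hR : IsClosed {p : X × X | p.2 ∈ closure (MulAction.orbit G p.1)})
    (w : ℕ → X) (w₀ : X) (hw : Tendsto w atTop (𝓝 w₀))
    (hconn : ∀ n, IsConnected (closure (MulAction.orbit G (w n)))) :
    IsConnected (closure (MulAction.orbit G w₀)) := by
  letI := TopologicalSpace.metrizableSpaceMetric X
  set K := closure (MulAction.orbit G w₀) with hK
  have hw₀K : w₀ ∈ K := subset_closure (MulAction.mem_orbit_self w₀)
  refine ⟨⟨w₀, hw₀K⟩, ?_⟩
  by_contra hnc
  rw [IsPreconnected] at hnc
  push_neg at hnc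
  obtain ⟨U, V, hUo, hVo, hKUV, ⟨a, haK, haU⟩, ⟨b, hbK, hbV⟩, hempty⟩ := hnc
  have hemp : K ∩ (U ∩ V) = ∅ := hempty
  -- A and B closed
  have hAeq : K ∩ U = K \ V := by
    ext x
    constructor
    · rintro ⟨hxK, hxU⟩
      refine ⟨hxK, fun hxV => ?_⟩
      have : x ∈ K ∩ (U ∩ V) := ⟨hxK, hxU, hxV⟩
      simp [hemp] at this
    · rintro ⟨hxK, hxV⟩
      exact ⟨hxK, (hKUV hxK).resolve_right hxV⟩
  have hBeq : K ∩ V = K \ U := by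
    ext x
    constructor
    · rintro ⟨hxK, hxV⟩
      refine ⟨hxK, fun hxU => ?_⟩
      have : x ∈ K ∩ (U ∩ V) := ⟨hxK, hxU, hxV⟩
      simp [hemp] at this
    · rintro ⟨hxK, hxU⟩
      exact ⟨hxK, (hKUV hxK).resolve_left hxU⟩
  have hAcl : IsClosed (K ∩ U) := by
    rw [hAeq]; exact isClosed_closure.sdiff hVo
  have hBcl : IsClosed (K ∩ V) := by
    rw [hBeq]; exact isClosed_closure.sdiff hUo
  have hdisj : Disjoint (K ∩ U) (K ∩ V) := by
    rw [Set.disjoint_iff_inter_eq_empty]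
    have : (K ∩ U) ∩ (K ∩ V) = K ∩ (U ∩ V) := by ext x; simp only [mem_inter_iff]; tauto
    rw [this]; exact hemp
  obtain ⟨U', V', hU'o, hV'o, hAU', hBV', hUV'⟩ :=
    NormalSpace.normal (K ∩ U) (K ∩ V) hAcl hBcl hdisj
  -- pick group elements
  have haU' : a ∈ U' := hAU' ⟨haK, haU⟩
  have hbV' : b ∈ V' := hBV' ⟨hbK, hbV⟩
  obtain ⟨ya, hyaU', hyaOrb⟩ := mem_closure_iff.1 haK U' hU'o haU'
  obtain ⟨yb, hybV', hybOrb⟩ := mem_closure_iff.1 hbK V' hV'o hbV'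
  obtain ⟨ga, hga⟩ := MulAction.mem_orbit_iff.1 hyaOrb
  obtain ⟨gb, hgb⟩ := MulAction.mem_orbit_iff.1 hybOrb
  have hta : Tendsto (fun n => ga • w n) atTop (𝓝 ya) := by
    have := hw.const_smul ga
    rwa [hga] at this
  have htb : Tendsto (fun n => gb • w n) atTop (𝓝 yb) := by
    have := hw.const_smul gb
    rwa [hgb] at this
  have hevA : ∀ᶠ n in atTop, ga • w n ∈ U' := hta (hU'o.mem_nhds hyaU')
  have hevB : ∀ᶠ n in atTop, gb • w n ∈ V' := htb (hV'o.mem_nhds hybV')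
  obtain ⟨N, hN⟩ := (hevA.and hevB).exists_forall_of_atTop
  -- for each n ≥ N, pick z outside U' ∪ V'
  have hz : ∀ n : ℕ, ∃ z, z ∈ closure (MulAction.orbit G (w (n + N))) ∧ z ∉ U' ∪ V' := by
    intro n
    by_contra h
    push_neg at h
    have hsub : closure (MulAction.orbit G (w (n + N))) ⊆ U' ∪ V' := fun z hzK => h z hzK
    obtain ⟨hne, hpre⟩ := hconn (n + N)
    have hnU : (closure (MulAction.orbit G (w (n + N))) ∩ U').Nonempty :=
      ⟨ga • w (n + N), subset_closure (MulAction.mem_orbit _ ga), (hN (n + N) (Nat.le_add_left N n)).1⟩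
    have hnV : (closure (MulAction.orbit G (w (n + N))) ∩ V').Nonempty :=
      ⟨gb • w (n + N), subset_closure (MulAction.mem_orbit _ gb), (hN (n + N) (Nat.le_add_left N n)).2⟩
    obtain ⟨x, _, hxU, hxV⟩ := hpre U' V' hU'o hV'o hsub hnU hnV
    exact hUV'.ne_of_mem hxU hxV rfl
  choose z hzK hzout using hz
  obtain ⟨z₀, -, φ, hφ, hφt⟩ := isSeqCompact_univ (x := z) (fun n => mem_univ _)
  have hz₀out : z₀ ∉ U' ∪ V' := by
    have hcl : IsClosed ((U' ∪ V')ᶜ) := (hU'o.union hV'o).isClosed_compl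
    exact hcl.mem_of_tendsto hφt (Eventually.of_forall fun k => hzout (φ k))
  have hwt : Tendsto (fun k => w (φ k + N)) atTop (𝓝 w₀) :=
    hw.comp ((tendsto_add_atTop_nat N).comp hφ.tendsto_atTop)
  have hpair : Tendsto (fun k => (w (φ k + N), z (φ k))) atTop (𝓝 (w₀, z₀)) :=
    hwt.prodMk_nhds hφt
  have hz₀K : z₀ ∈ K := by
    have : (w₀, z₀) ∈ {p : X × X | p.2 ∈ closure (MulAction.orbit G p.1)} :=
      hR.mem_of_tendsto hpair (Eventually.of_forall fun k => hzK (φ k))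
    exact this
  exact hz₀out ((hKUV hz₀K).elim (fun h => Or.inl (hAU' ⟨hz₀K, h⟩))
    (fun h => Or.inr (hBV' ⟨hz₀K, h⟩)))
end

section
/- Let G be a topological group acting continuously on a compact metrizable space X. If the relation R = {(x,y) : y ∈ closure(G·x)} is closed, then the collection of orbit closures {closure(G·x) : x ∈ X} forms a partition of X, i.e., any two orbit closures are either equal or disjoint. -/
open Topology Filter Set

private lemma closure_orbit_mono {G X : Type*} [Group G] [TopologicalSpace X]
    [MulAction G X] [ContinuousConstSMul G X] {w y : X}
    (h : w ∈ closure (MulAction.orbit G y)) :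
    closure (MulAction.orbit G w) ⊆ closure (MulAction.orbit G y) := by
  apply closure_minimal _ isClosed_closure
  rintro _ ⟨g, rfl⟩
  have hc : Continuous fun z : X => g • z := continuous_const_smul g
  have : g • w ∈ (fun z : X => g • z) '' closure (MulAction.orbit G y) := ⟨w, h, rfl⟩
  have h2 := (image_closure_subset_closure_image hc (s := MulAction.orbit G y)) this
  refine closure_mono ?_ h2
  rintro _ ⟨_, ⟨a, rfl⟩, rfl⟩
  exact ⟨g * a, by simp [mul_smul]⟩

private lemma mem_closure_symm {G X : Type*} [Group G] [TopologicalSpace G]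
    [TopologicalSpace X] [MulAction G X] [ContinuousSMul G X]
    (hR : IsClosed {p : X × X | p.2 ∈ closure (MulAction.orbit G p.1)})
    {x z : X} (h : z ∈ closure (MulAction.orbit G x)) :
    x ∈ closure (MulAction.orbit G z) := by
  have hsub : MulAction.orbit G x ×ˢ ({x} : Set X) ⊆
      {p : X × X | p.2 ∈ closure (MulAction.orbit G p.1)} := by
    rintro ⟨w, x'⟩ ⟨⟨g, rfl⟩, hx'⟩
    simp only [mem_singleton_iff] at hx'
    subst hx'
    exact subset_closure ⟨g⁻¹, by simp [smul_smul]⟩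
  have : (z, x) ∈ closure (MulAction.orbit G x ×ˢ ({x} : Set X)) := by
    rw [closure_prod_eq]
    exact ⟨h, subset_closure rfl⟩
  exact hR.closure_subset (closure_mono hsub this)

theorem stmt_2 {G X : Type*} [Group G] [TopologicalSpace G] [TopologicalSpace X]
    [MulAction G X] [ContinuousSMul G X]
    [CompactSpace X] [TopologicalSpace.MetrizableSpace X]
    (hR : IsClosed {p : X × X | p.2 ∈ closure (MulAction.orbit G p.1)}) :
    ∀ x y : X,
      closure (MulAction.orbit G x) = closure (MulAction.orbit G y) ∨
      Disjoint (closure (MulAction.orbit G x)) (closure (MulAction.orbit G y)) := by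
  intro x y
  by_cases hd : Disjoint (closure (MulAction.orbit G x)) (closure (MulAction.orbit G y))
  · exact Or.inr hd
  left
  obtain ⟨z, hzx, hzy⟩ := Set.not_disjoint_iff.mp hd
  have hx : x ∈ closure (MulAction.orbit G z) := mem_closure_symm hR hzx
  have hy : y ∈ closure (MulAction.orbit G z) := mem_closure_symm hR hzy
  exact le_antisymm
    ((closure_orbit_mono hx).trans (closure_orbit_mono hzy))
    ((closure_orbit_mono hy).trans (closure_orbit_mono hzx))
end

section
/- Let f be a homeomorphism of a compact metrizable space X such that the induced Z-action is R-closed (i.e., R = {(x,y) : y ∈ closure of the f-orbit of x} is closed). Then f is pointwise almost periodic: for every x ∈ X and every open neighborhood U of x, the set N(x,U) = {n ∈ Z : f^n(x) ∈ U} is syndetic in Z, i.e., there is K ≥ 0 such that every interval of K+1 consecutive integers meets N(x,U). -/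
/-!
If `y` lies in the orbit closure of `x`, then `(y, x)` is a limit of pairs `(f^n x, x)`, each of
which lies in the orbit-closure relation; R-closedness therefore puts `x` in the orbit closure of
`y`. Hence every point of the compact orbit closure of `x` enters `U` under some `f^i`, finitely
many `i` suffice, and since `f^n x` also lies in that orbit closure, each `n` is followed within
a bounded gap by a return time of `x` to `U`.
-/

open Topology Filter Set

/-- The ℤ-orbit of a point under a bijection. -/
def orbitE {X : Type*} (e : Equiv.Perm X) (x : X) : Set X :=
  Set.range fun n : ℤ => (e ^ n) x

/-- A homeomorphism is R-closed if the orbit-closure relation is closed. -/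
def RClosed {X : Type*} [TopologicalSpace X] (f : X ≃ₜ X) : Prop :=
  IsClosed {p : X × X | p.2 ∈ closure (orbitE f.toEquiv p.1)}

/-- A set of integers is syndetic. -/
def IsSyndetic (S : Set ℤ) : Prop :=
  ∃ K : ℕ, ∀ n : ℤ, ∃ m ∈ S, n ≤ m ∧ m ≤ n + K

/-- A point is almost periodic for a bijection of a topological space. -/
def AlmostPeriodicPt {X : Type*} [TopologicalSpace X] (e : Equiv.Perm X) (x : X) : Prop :=
  ∀ U : Set X, IsOpen U → x ∈ U → IsSyndetic {n : ℤ | (e ^ n) x ∈ U}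

theorem isSyndetic_of_forall_exists_add_mem {S : Set ℤ} (t : Finset ℤ)
    (h : ∀ n, ∃ i ∈ t, n + i ∈ S) : IsSyndetic S := by
  obtain ⟨i₀, hi₀, -⟩ := h 0
  have ht : t.Nonempty := ⟨i₀, hi₀⟩
  refine ⟨(t.max' ht - t.min' ht).toNat, fun n => ?_⟩
  obtain ⟨i, hi, hiS⟩ := h (n - t.min' ht)
  have hmin := t.min'_le i hi
  have hmax := t.le_max' i hi
  exact ⟨n - t.min' ht + i, hiS, by omega, by omega⟩

theorem Homeomorph.toEquiv_zpow {X : Type*} [TopologicalSpace X] (f : X ≃ₜ X) (n : ℤ) :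
    (f ^ n).toEquiv = f.toEquiv ^ n :=
  map_zpow (MonoidHom.mk' (fun g : X ≃ₜ X => g.toEquiv) fun _ _ => rfl) f n

theorem Homeomorph.continuous_toEquiv_zpow {X : Type*} [TopologicalSpace X] (f : X ≃ₜ X)
    (n : ℤ) : Continuous (f.toEquiv ^ n) := by
  rw [← f.toEquiv_zpow]
  exact (f ^ n).continuous

theorem mem_orbitE_zpow_apply {X : Type*} (e : Equiv.Perm X) (x : X) (n : ℤ) :
    x ∈ orbitE e ((e ^ n) x) :=
  ⟨-n, show (e ^ (-n) * e ^ n) x = x by rw [← zpow_add, neg_add_cancel, zpow_zero]; rfl⟩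

theorem RClosed.mem_closure_orbitE_of_mem {X : Type*} [TopologicalSpace X] {f : X ≃ₜ X}
    (hf : RClosed f) {x y : X} (hy : y ∈ closure (orbitE f.toEquiv x)) :
    x ∈ closure (orbitE f.toEquiv y) := by
  have hsub : orbitE f.toEquiv x ×ˢ {x} ⊆
      {p : X × X | p.2 ∈ closure (orbitE f.toEquiv p.1)} := by
    rintro ⟨-, z⟩ ⟨⟨n, rfl⟩, rfl : z = x⟩
    exact subset_closure (mem_orbitE_zpow_apply _ _ n)
  have hyx : (y, x) ∈ closure (orbitE f.toEquiv x ×ˢ {x}) := by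
    rw [closure_prod_eq]
    exact ⟨hy, subset_closure rfl⟩
  exact closure_minimal hsub hf hyx

theorem stmt_4_general {X : Type*} [TopologicalSpace X] [CompactSpace X]
    (f : X ≃ₜ X) (hf : RClosed f) :
    ∀ x : X, ∀ U : Set X, IsOpen U → x ∈ U →
      IsSyndetic {n : ℤ | (f.toEquiv ^ n) x ∈ U} := by
  intro x U hU hxU
  set e := f.toEquiv
  have hcover : closure (orbitE e x) ⊆ ⋃ i : ℤ, (e ^ i) ⁻¹' U := fun y hy => by
    obtain ⟨-, hzU, i, rfl⟩ := mem_closure_iff.mp (hf.mem_closure_orbitE_of_mem hy) U hU hxU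
    exact mem_iUnion.mpr ⟨i, hzU⟩
  obtain ⟨t, ht⟩ := isClosed_closure.isCompact.elim_finite_subcover _
    (fun i => hU.preimage (f.continuous_toEquiv_zpow i)) hcover
  refine isSyndetic_of_forall_exists_add_mem t fun n => ?_
  obtain ⟨i, hi, hiU⟩ := mem_iUnion₂.mp (ht (subset_closure ⟨n, rfl⟩))
  refine ⟨i, hi, ?_⟩
  rwa [Set.mem_ofPred_eq, add_comm, zpow_add, Equiv.Perm.mul_apply]

theorem stmt_4 {X : Type*} [TopologicalSpace X] [CompactSpace X]
    [TopologicalSpace.MetrizableSpace X] (f : X ≃ₜ X) (hf : RClosed f) :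
    ∀ x : X, ∀ U : Set X, IsOpen U → x ∈ U →
      IsSyndetic {n : ℤ | (f.toEquiv ^ n) x ∈ U} :=
  stmt_4_general f hf
end

section
/- Let f be a homeomorphism of a compact metrizable space X and k a positive integer. If f is pointwise almost periodic, then f^k is pointwise almost periodic. -/
open Topology Filter Set

/-!
Let `g = f ^ k`. The `g`-orbit closure of `x` contains a `g`-minimal set `N`; pick `y ∈ N`.
The `f`-orbit closure of `y` is the finite union of the translates `f ^ r '' N`, `r < k`, each of
which is again `g`-minimal because `f ^ r` commutes with `g`. Since `x` is `f`-almost periodic and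
`y` lies in its `f`-orbit closure, `x` lies in the `f`-orbit closure of `y`, hence in a `g`-minimal
set; in a compact space every point of a minimal set is almost periodic, by a finite subcover of
the translates `g ^ (-j) '' U`.
-/

namespace Homeomorph

variable {X : Type*} [TopologicalSpace X]

def toPermHom : (X ≃ₜ X) →* Equiv.Perm X where
  toFun := Homeomorph.toEquiv
  map_one' := rfl
  map_mul' _ _ := rfl

theorem toEquiv_pow (g : X ≃ₜ X) (n : ℕ) : (g ^ n).toEquiv = g.toEquiv ^ n :=
  map_pow toPermHom g n

theorem toEquiv_zpow_s5 (g : X ≃ₜ X) (n : ℤ) : (g ^ n).toEquiv = g.toEquiv ^ n :=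
  map_zpow toPermHom g n

@[simp]
theorem toEquiv_zpow_apply (g : X ≃ₜ X) (n : ℤ) (x : X) : (g.toEquiv ^ n) x = (g ^ n) x := by
  rw [← toEquiv_zpow_s5, coe_toEquiv]

end Homeomorph

section Orbit

variable {X : Type*}

theorem zpow_apply_mem_orbitE (e : Equiv.Perm X) (n : ℤ) (x : X) : (e ^ n) x ∈ orbitE e x :=
  ⟨n, rfl⟩

theorem self_mem_orbitE (e : Equiv.Perm X) (x : X) : x ∈ orbitE e x :=
  ⟨0, rfl⟩

theorem orbitE_zpow_apply (e : Equiv.Perm X) (n : ℤ) (x : X) :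
    orbitE e ((e ^ n) x) = orbitE e x := by
  ext y
  constructor
  · rintro ⟨m, rfl⟩
    beta_reduce
    rw [← Equiv.Perm.mul_apply, ← zpow_add]
    exact zpow_apply_mem_orbitE e _ x
  · rintro ⟨m, rfl⟩
    beta_reduce
    rw [← sub_add_cancel m n, zpow_add, Equiv.Perm.mul_apply]
    exact zpow_apply_mem_orbitE e _ _

theorem image_orbitE_of_commute {h e : Equiv.Perm X} (hc : Commute h e) (x : X) :
    h '' orbitE e x = orbitE e (h x) := by
  rw [orbitE, ← range_comp]
  congr 1
  funext n
  exact Equiv.Perm.ext_iff.1 (hc.zpow_right n).eq x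

theorem orbitE_pow_subset (e : Equiv.Perm X) (k : ℕ) (x : X) : orbitE (e ^ k) x ⊆ orbitE e x := by
  rintro _ ⟨n, rfl⟩
  beta_reduce
  rw [← zpow_natCast, ← zpow_mul]
  exact zpow_apply_mem_orbitE e _ x

theorem orbitE_eq_biUnion_pow (e : Equiv.Perm X) {k : ℕ} (hk : 0 < k) (x : X) :
    orbitE e x = ⋃ r ∈ Finset.range k, (e ^ r) '' orbitE (e ^ k) x := by
  refine (subset_antisymm ?_ (iUnion₂_subset fun r _ => ?_))
  · rintro _ ⟨n, rfl⟩
    have hk' : (0 : ℤ) < k := by exact_mod_cast hk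
    refine mem_iUnion₂.2 ⟨(n % k).toNat, ?_, (e ^ k) ^ (n / k) • x, ⟨n / k, rfl⟩, ?_⟩
    · rw [Finset.mem_range]
      have := Int.emod_lt_of_pos n hk'
      omega
    · have hr : (((n % k).toNat : ℕ) : ℤ) = n % k := Int.toNat_of_nonneg (Int.emod_nonneg n hk'.ne')
      rw [Equiv.Perm.smul_def, ← Equiv.Perm.mul_apply, ← zpow_natCast, hr, ← zpow_natCast,
        ← zpow_mul, ← zpow_add, Int.emod_add_mul_ediv]
  · rintro _ ⟨_, ⟨n, rfl⟩, rfl⟩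
    beta_reduce
    rw [← Equiv.Perm.mul_apply, ← zpow_natCast, ← zpow_natCast, ← zpow_mul, ← zpow_add]
    exact zpow_apply_mem_orbitE e _ x

end Orbit

section Topological

variable {X : Type*} [TopologicalSpace X]

theorem closure_orbitE_subset_of_mem (g : X ≃ₜ X) {x y : X}
    (hy : y ∈ closure (orbitE g.toEquiv x)) :
    closure (orbitE g.toEquiv y) ⊆ closure (orbitE g.toEquiv x) := by
  refine closure_minimal ?_ isClosed_closure
  rintro _ ⟨n, rfl⟩
  have hinv : (g ^ n) '' closure (orbitE g.toEquiv x) = closure (orbitE g.toEquiv x) := by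
    rw [Homeomorph.image_closure, ← Homeomorph.coe_toEquiv, Homeomorph.toEquiv_zpow_s5,
      image_orbitE_of_commute ((Commute.refl _).zpow_left n), orbitE_zpow_apply]
  beta_reduce
  rw [Homeomorph.toEquiv_zpow_apply, ← hinv]
  exact mem_image_of_mem _ hy

theorem closure_orbitE_eq_biUnion (f : X ≃ₜ X) {k : ℕ} (hk : 0 < k) (x : X) :
    closure (orbitE f.toEquiv x) =
      ⋃ r ∈ Finset.range k, (f ^ r) '' closure (orbitE (f ^ k).toEquiv x) := by
  rw [orbitE_eq_biUnion_pow f.toEquiv hk x, Finset.closure_biUnion]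
  refine iUnion₂_congr fun r _ => ?_
  rw [← Homeomorph.toEquiv_pow, ← Homeomorph.toEquiv_pow, Homeomorph.coe_toEquiv,
    Homeomorph.image_closure]

/-- Minimal sets are encoded by the property that every orbit in them is dense; closedness,
invariance and minimality among nonempty closed invariant sets follow. -/
def IsMinimalSet (e : Equiv.Perm X) (N : Set X) : Prop :=
  N.Nonempty ∧ ∀ y ∈ N, closure (orbitE e y) = N

theorem IsMinimalSet.image_of_commute {e : Equiv.Perm X} {N : Set X} (hN : IsMinimalSet e N)
    (h : X ≃ₜ X) (hc : Commute h.toEquiv e) : IsMinimalSet e (h '' N) := by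
  refine ⟨hN.1.image h, ?_⟩
  rintro _ ⟨y, hy, rfl⟩
  rw [← Homeomorph.coe_toEquiv, ← image_orbitE_of_commute hc, Homeomorph.coe_toEquiv,
    ← h.image_closure, hN.2 y hy]

theorem exists_isMinimalSet_subset_closure_orbitE [CompactSpace X] (g : X ≃ₜ X) (x : X) :
    ∃ N ⊆ closure (orbitE g.toEquiv x), IsMinimalSet g.toEquiv N := by
  set S : Set (Set X) := {B | B.Nonempty ∧ IsClosed B ∧ ∀ y ∈ B, orbitE g.toEquiv y ⊆ B}
  have closure_mem : ∀ y, closure (orbitE g.toEquiv y) ∈ S := fun y =>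
    ⟨⟨y, subset_closure (self_mem_orbitE _ y)⟩, isClosed_closure,
      fun z hz => subset_closure.trans (closure_orbitE_subset_of_mem g hz)⟩
  have chain_bound : ∀ c ⊆ S, IsChain (· ⊆ ·) c → c.Nonempty → ∃ lb ∈ S, ∀ B ∈ c, lb ⊆ B := by
    intro c hcS hchain hcne
    refine ⟨⋂₀ c, ⟨?_, isClosed_sInter fun B hB => (hcS hB).2.1, ?_⟩,
      fun B hB => sInter_subset_of_mem hB⟩
    · have : Nonempty c := hcne.to_subtype
      exact IsCompact.nonempty_sInter_of_directed_nonempty_isCompact_isClosed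
        (fun a ha b hb => (hchain.total ha hb).elim (fun h => ⟨a, ha, le_rfl, h⟩)
          fun h => ⟨b, hb, h, le_rfl⟩) (fun B hB => (hcS hB).1) (fun B hB => (hcS hB).2.1.isCompact)
        (fun B hB => (hcS hB).2.1)
    · exact fun y hy => subset_sInter fun B hB => (hcS hB).2.2 y (hy B hB)
  obtain ⟨N, hNx, hNmin⟩ := zorn_superset_nonempty S chain_bound _ (closure_mem x)
  refine ⟨N, hNx, hNmin.prop.1, fun y hy => ?_⟩
  have hyN : closure (orbitE g.toEquiv y) ⊆ N :=
    closure_minimal (hNmin.prop.2.2 y hy) hNmin.prop.2.1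
  exact hyN.antisymm (hNmin.2 (closure_mem y) hyN)

theorem mem_closure_orbitE_of_almostPeriodicPt [RegularSpace X] (g : X ≃ₜ X) {x y : X}
    (hx : AlmostPeriodicPt g.toEquiv x) (hy : y ∈ closure (orbitE g.toEquiv x)) :
    x ∈ closure (orbitE g.toEquiv y) := by
  refine mem_closure_iff.2 fun o ho hxo => ?_
  obtain ⟨t, ht, htc, hto⟩ := exists_mem_nhds_isClosed_subset (ho.mem_nhds hxo)
  obtain ⟨K, hK⟩ := hx (interior t) isOpen_interior (mem_interior_iff_mem_nhds.2 ht)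
  have hcover : orbitE g.toEquiv x ⊆ ⋃ j ≤ K, (g ^ (j : ℤ)) ⁻¹' interior t := by
    rintro _ ⟨n, rfl⟩
    obtain ⟨m, hm, hnm, hmK⟩ := hK n
    beta_reduce
    refine mem_iUnion₂.2 ⟨(m - n).toNat, by omega, ?_⟩
    rw [mem_ofPred_eq, Homeomorph.toEquiv_zpow_apply] at hm
    rwa [mem_preimage, Homeomorph.toEquiv_zpow_apply, ← Homeomorph.mul_apply, ← zpow_add,
      Int.toNat_of_nonneg (by omega), sub_add_cancel]
  have hy' := closure_mono hcover hy
  rw [closure_iUnion₂_le_nat] at hy'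
  obtain ⟨j, -, hj⟩ := mem_iUnion₂.1 hy'
  have hjt : (g ^ (j : ℤ)) y ∈ t :=
    closure_minimal interior_subset htc ((g ^ (j : ℤ)).continuous.closure_preimage_subset _ hj)
  exact ⟨_, hto hjt, j, Homeomorph.toEquiv_zpow_apply g j y⟩

theorem almostPeriodicPt_of_forall_mem_closure_orbitE [CompactSpace X] (g : X ≃ₜ X) {x : X}
    (hx : ∀ y ∈ closure (orbitE g.toEquiv x), x ∈ closure (orbitE g.toEquiv y)) :
    AlmostPeriodicPt g.toEquiv x := by
  intro U hU hxU
  have hcover : closure (orbitE g.toEquiv x) ⊆ ⋃ j : ℤ, (g ^ j) ⁻¹' U := by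
    intro y hy
    obtain ⟨_, hzU, j, rfl⟩ := mem_closure_iff.1 (hx y hy) U hU hxU
    exact mem_iUnion.2 ⟨j, by rwa [mem_preimage, ← Homeomorph.toEquiv_zpow_apply]⟩
  obtain ⟨t, ht⟩ := isClosed_closure.isCompact.elim_finite_subcover _
    (fun j => hU.preimage (g ^ j).continuous) hcover
  set K := t.sup Int.natAbs
  refine ⟨2 * K, fun n => ?_⟩
  have hz : (g ^ (n + K)) x ∈ closure (orbitE g.toEquiv x) :=
    subset_closure ⟨n + K, Homeomorph.toEquiv_zpow_apply g _ x⟩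
  obtain ⟨j, hj, hjU⟩ := mem_iUnion₂.1 (ht hz)
  have hjK : j.natAbs ≤ K := Finset.le_sup hj
  refine ⟨j + (n + K), ?_, by omega, by omega⟩
  rwa [mem_ofPred_eq, Homeomorph.toEquiv_zpow_apply, zpow_add, Homeomorph.mul_apply]

theorem IsMinimalSet.almostPeriodicPt [CompactSpace X] {g : X ≃ₜ X} {N : Set X}
    (hN : IsMinimalSet g.toEquiv N) {x : X} (hx : x ∈ N) : AlmostPeriodicPt g.toEquiv x :=
  almostPeriodicPt_of_forall_mem_closure_orbitE g fun y hy => by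
    rw [hN.2 x hx] at hy
    rwa [hN.2 y hy]

end Topological

theorem stmt_5 {X : Type*} [TopologicalSpace X] [CompactSpace X]
    [TopologicalSpace.MetrizableSpace X] (f : X ≃ₜ X) (k : ℕ) (hk : 0 < k)
    (hap : ∀ x : X, AlmostPeriodicPt f.toEquiv x) :
    ∀ x : X, AlmostPeriodicPt (f.toEquiv ^ k) x := by
  intro x
  obtain ⟨N, hNx, hN⟩ := exists_isMinimalSet_subset_closure_orbitE (f ^ k) x
  obtain ⟨y, hy⟩ := hN.1
  have hyx : y ∈ closure (orbitE f.toEquiv x) := by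
    refine closure_mono ?_ (hNx hy)
    rw [Homeomorph.toEquiv_pow]
    exact orbitE_pow_subset _ k x
  have hxy := mem_closure_orbitE_of_almostPeriodicPt f (hap x) hyx
  rw [closure_orbitE_eq_biUnion f hk, hN.2 y hy] at hxy
  obtain ⟨r, -, hxr⟩ := mem_iUnion₂.1 hxy
  have hc : Commute (f ^ r).toEquiv (f ^ k).toEquiv :=
    (Commute.pow_pow_self f r k).map Homeomorph.toPermHom
  rw [← Homeomorph.toEquiv_pow]
  exact (hN.image_of_commute (f ^ r) hc).almostPeriodicPt hxr
end
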